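/- Let d be a strictly monotone continuous linear dilation with respect to the weighted Euclidean norm ‖x‖ = √(xᵀPx), with generator G. Set α = λ_max(P^{1/2}GP^{−1/2} + P^{−1/2}GᵀP^{1/2})/2 and β = λ_min(P^{1/2}GP^{−1/2} + P^{−1/2}GᵀP^{1/2})/2 > 0. Then for all x ∈ ℝ^n: ‖x‖_d^α ≤ ‖x‖ ≤ ‖x‖_d^β when ‖x‖_d ≤ 1, and ‖x‖_d^β ≤ ‖x‖ ≤ ‖x‖_d^α when ‖x‖_d ≥ 1. -/

import Mathlib

open Matrix

private lemma expDeriv {n : ℕ} (G : Matrix (Fin n) (Fin n) ℝ) (x : Fin n → ℝ) (s : ℝ) :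
    HasDerivAt (fun t : ℝ => (NormedSpace.exp (t • G)).mulVec x)
      (G.mulVec ((NormedSpace.exp (s • G)).mulVec x)) s := by
  letI : SeminormedRing (Matrix (Fin n) (Fin n) ℝ) := Matrix.linftyOpSemiNormedRing
  letI : NormedRing (Matrix (Fin n) (Fin n) ℝ) := Matrix.linftyOpNormedRing
  letI : NormedAlgebra ℝ (Matrix (Fin n) (Fin n) ℝ) := Matrix.linftyOpNormedAlgebra
  have h := hasDerivAt_exp_smul_const' (𝕂 := ℝ) G s
  let L : Matrix (Fin n) (Fin n) ℝ →ₗ[ℝ] (Fin n → ℝ) :=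
    { toFun := fun M => M.mulVec x
      map_add' := fun A B => Matrix.add_mulVec A B x
      map_smul' := fun c A => Matrix.smul_mulVec c A x }
  have h2 := (LinearMap.toContinuousLinearMap L).hasFDerivAt.comp_hasDerivAt s h
  have h3 : HasDerivAt (fun t : ℝ => (NormedSpace.exp (t • G)).mulVec x)
      ((G * NormedSpace.exp (s • G)).mulVec x) s := h2
  simpa [Function.comp_def, L, Matrix.mulVec_mulVec] using h3

private lemma sqrt_le_rpow_aux {c t r : ℝ} (hc : 0 < c) (ht : 0 < t)
    (h : Real.log c ≤ 2 * r * Real.log t) : Real.sqrt c ≤ t ^ r := by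
  have key : c ≤ (t ^ r) ^ 2 := by
    have e : (t ^ r) ^ 2 = Real.exp (2 * r * Real.log t) := by
      rw [sq, Real.rpow_def_of_pos ht, ← Real.exp_add]
      ring_nf
    calc c = Real.exp (Real.log c) := (Real.exp_log hc).symm
      _ ≤ Real.exp (2 * r * Real.log t) := Real.exp_le_exp.2 h
      _ = (t ^ r) ^ 2 := e.symm
  calc Real.sqrt c ≤ Real.sqrt ((t ^ r) ^ 2) := Real.sqrt_le_sqrt key
    _ = t ^ r := Real.sqrt_sq (Real.rpow_nonneg ht.le r)

private lemma rpow_le_sqrt_aux {c t r : ℝ} (hc : 0 < c) (ht : 0 < t)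
    (h : 2 * r * Real.log t ≤ Real.log c) : t ^ r ≤ Real.sqrt c := by
  have key : (t ^ r) ^ 2 ≤ c := by
    have e : (t ^ r) ^ 2 = Real.exp (2 * r * Real.log t) := by
      rw [sq, Real.rpow_def_of_pos ht, ← Real.exp_add]
      ring_nf
    calc (t ^ r) ^ 2 = Real.exp (2 * r * Real.log t) := e
      _ ≤ Real.exp (Real.log c) := Real.exp_le_exp.2 h
      _ = c := Real.exp_log hc
  calc t ^ r = Real.sqrt ((t ^ r) ^ 2) := (Real.sqrt_sq (Real.rpow_nonneg ht.le r)).symm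
    _ ≤ Real.sqrt c := Real.sqrt_le_sqrt key

/-- sandwich bounds between the weighted Euclidean norm
‖x‖ = √(xᵀPx) and the canonical homogeneous norm ‖x‖_d, with exponents
α = λ_max(P^{1/2}GP^{−1/2} + P^{−1/2}GᵀP^{1/2})/2 and
β = λ_min(P^{1/2}GP^{−1/2} + P^{−1/2}GᵀP^{1/2})/2 > 0.
Here Q denotes the positive definite square root P^{1/2} and the extreme
eigenvalues of the symmetric matrix M are characterized via Rayleigh quotients. -/
theorem canonical_norm_sandwich {n : ℕ} (P G Q : Matrix (Fin n) (Fin n) ℝ)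
    (hP : P.PosDef) (hPG : (P * G + Gᵀ * P).PosDef)
    (hQ : Q.PosDef) (hQQ : Q * Q = P)
    (nd : (Fin n → ℝ) → ℝ)
    (hnd0 : nd 0 = 0)
    (hnd : ∀ x : Fin n → ℝ, x ≠ 0 → 0 < nd x ∧
      Real.sqrt (((NormedSpace.exp ((-(Real.log (nd x))) • G)).mulVec x) ⬝ᵥ
        P.mulVec ((NormedSpace.exp ((-(Real.log (nd x))) • G)).mulVec x)) = 1)
    (α β : ℝ)
    (hα : IsGreatest {r : ℝ | ∃ y : Fin n → ℝ, y ⬝ᵥ y = 1 ∧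
      y ⬝ᵥ (Q * G * Q⁻¹ + Q⁻¹ * Gᵀ * Q).mulVec y = 2 * r} α)
    (hβ : IsLeast {r : ℝ | ∃ y : Fin n → ℝ, y ⬝ᵥ y = 1 ∧
      y ⬝ᵥ (Q * G * Q⁻¹ + Q⁻¹ * Gᵀ * Q).mulVec y = 2 * r} β) :
    0 < β ∧ ∀ x : Fin n → ℝ,
      (nd x ≤ 1 → nd x ^ α ≤ Real.sqrt (x ⬝ᵥ P.mulVec x) ∧
        Real.sqrt (x ⬝ᵥ P.mulVec x) ≤ nd x ^ β) ∧
      (1 ≤ nd x → nd x ^ β ≤ Real.sqrt (x ⬝ᵥ P.mulVec x) ∧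
        Real.sqrt (x ⬝ᵥ P.mulVec x) ≤ nd x ^ α) := by
  have hQdet : IsUnit Q.det := isUnit_iff_ne_zero.2 hQ.det_pos.ne'
  have hQQinv : Q * Q⁻¹ = 1 := Matrix.mul_nonsing_inv Q hQdet
  have hQinvQ : Q⁻¹ * Q = 1 := Matrix.nonsing_inv_mul Q hQdet
  have hQs : Qᵀ = Q := by
    have h : Qᴴ = Q := hQ.1
    rwa [Matrix.conjTranspose_eq_transpose_of_trivial] at h
  -- positivity of quadratic forms over ℝ
  have hPpos : ∀ z : Fin n → ℝ, z ≠ 0 → 0 < z ⬝ᵥ P.mulVec z := by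
    intro z hz
    simpa using hP.re_dotProduct_pos hz
  have hPGpos : ∀ z : Fin n → ℝ, z ≠ 0 → 0 < z ⬝ᵥ (P * G + Gᵀ * P).mulVec z := by
    intro z hz
    simpa using hPG.re_dotProduct_pos hz
  -- conjugation identity for quadratic forms
  have quad : ∀ (A : Matrix (Fin n) (Fin n) ℝ) (z : Fin n → ℝ),
      (Q.mulVec z) ⬝ᵥ A.mulVec (Q.mulVec z) = z ⬝ᵥ (Qᵀ * A * Q).mulVec z := by
    intro A z
    rw [Matrix.mulVec_mulVec, Matrix.dotProduct_mulVec, Matrix.dotProduct_mulVec]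
    congr 1
    conv_rhs => rw [Matrix.mul_assoc, ← Matrix.vecMul_vecMul, Matrix.vecMul_transpose]
  have hQMQ : Qᵀ * (Q * G * Q⁻¹ + Q⁻¹ * Gᵀ * Q) * Q = P * G + Gᵀ * P := by
    rw [hQs, Matrix.mul_add, Matrix.add_mul]
    have h1 : Q * (Q * G * Q⁻¹) * Q = P * G := by
      have : Q * (Q * G * Q⁻¹) * Q = Q * Q * G * (Q⁻¹ * Q) := by
        simp only [Matrix.mul_assoc]
      rw [this, hQinvQ, Matrix.mul_one, hQQ]
    have h2 : Q * (Q⁻¹ * Gᵀ * Q) * Q = Gᵀ * P := by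
      have : Q * (Q⁻¹ * Gᵀ * Q) * Q = Q * Q⁻¹ * (Gᵀ * (Q * Q)) := by
        simp only [Matrix.mul_assoc]
      rw [this, hQQinv, hQQ, Matrix.one_mul]
    rw [h1, h2]
  have hQnorm : ∀ z : Fin n → ℝ, (Q.mulVec z) ⬝ᵥ (Q.mulVec z) = z ⬝ᵥ P.mulVec z := by
    intro z
    have h := quad 1 z
    rwa [Matrix.one_mulVec, Matrix.mul_one, hQs, hQQ] at h
  -- membership of rescaled Rayleigh quotients in the spectrum-characterizing set
  have mem : ∀ z : Fin n → ℝ, z ≠ 0 →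
      (z ⬝ᵥ (P * G + Gᵀ * P).mulVec z) / (2 * (z ⬝ᵥ P.mulVec z)) ∈
        {r : ℝ | ∃ y : Fin n → ℝ, y ⬝ᵥ y = 1 ∧
          y ⬝ᵥ (Q * G * Q⁻¹ + Q⁻¹ * Gᵀ * Q).mulVec y = 2 * r} := by
    intro z hz
    have hzP : 0 < z ⬝ᵥ P.mulVec z := hPpos z hz
    set c : ℝ := Real.sqrt (z ⬝ᵥ P.mulVec z) with hc_def
    have hc : 0 < c := Real.sqrt_pos.2 hzP
    have hc2 : c * c = z ⬝ᵥ P.mulVec z := Real.mul_self_sqrt hzP.le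
    have hc2' : c ^ 2 = z ⬝ᵥ P.mulVec z := by rw [sq]; exact hc2
    refine ⟨c⁻¹ • (Q.mulVec z), ?_, ?_⟩
    · rw [smul_dotProduct, dotProduct_smul, hQnorm, smul_eq_mul, smul_eq_mul]
      field_simp
      nlinarith [hc2, hc2']
    · rw [Matrix.mulVec_smul, smul_dotProduct, dotProduct_smul,
        smul_eq_mul, smul_eq_mul, quad, hQMQ]
      field_simp
      ring_nf
      rw [hc2']
  have hray : ∀ z : Fin n → ℝ, z ≠ 0 →
      2 * β * (z ⬝ᵥ P.mulVec z) ≤ z ⬝ᵥ (P * G + Gᵀ * P).mulVec z ∧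
      z ⬝ᵥ (P * G + Gᵀ * P).mulVec z ≤ 2 * α * (z ⬝ᵥ P.mulVec z) := by
    intro z hz
    have hzP : 0 < z ⬝ᵥ P.mulVec z := hPpos z hz
    have h1 := hβ.2 (mem z hz)
    have h2 := hα.2 (mem z hz)
    rw [le_div_iff₀ (by positivity)] at h1
    rw [div_le_iff₀ (by positivity)] at h2
    constructor <;> nlinarith
  -- positivity of β
  have hβpos : 0 < β := by
    obtain ⟨y, hy1, hy2⟩ := hβ.1
    have hy0 : y ≠ 0 := by
      intro h
      rw [h] at hy1
      simp at hy1
    set z : Fin n → ℝ := Q⁻¹.mulVec y with hz_def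
    have hQz : Q.mulVec z = y := by
      rw [hz_def, Matrix.mulVec_mulVec, hQQinv, Matrix.one_mulVec]
    have hz0 : z ≠ 0 := by
      intro h
      apply hy0
      rw [← hQz, h, Matrix.mulVec_zero]
    have hval : y ⬝ᵥ (Q * G * Q⁻¹ + Q⁻¹ * Gᵀ * Q).mulVec y
        = z ⬝ᵥ (P * G + Gᵀ * P).mulVec z := by
      rw [← hQz, quad, hQMQ]
    have := hPGpos z hz0
    rw [hval] at hy2
    linarith
  refine ⟨hβpos, fun x => ?_⟩
  have hαβ : β ≤ α := hα.2 hβ.1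
  have hαpos : 0 < α := lt_of_lt_of_le hβpos hαβ
  by_cases hx : x = 0
  · subst hx
    constructor
    · intro _
      rw [hnd0]
      constructor
      · rw [Real.zero_rpow hαpos.ne']
        positivity
      · rw [Real.zero_rpow hβpos.ne']
        simp
    · intro h1
      rw [hnd0] at h1
      linarith
  -- main case : x ≠ 0
  obtain ⟨hnd_pos, hnd_eq⟩ := hnd x hx
  set s₀ : ℝ := -(Real.log (nd x)) with hs₀_def
  set v : ℝ → Fin n → ℝ := fun s => (NormedSpace.exp (s • G)).mulVec x with hv_def
  have hvne : ∀ s : ℝ, v s ≠ 0 := by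
    intro s h
    have hcomm : Commute ((-s) • G) (s • G) :=
      ((Commute.refl G).smul_left (-s)).smul_right s
    have hinv : NormedSpace.exp ((-s) • G) * NormedSpace.exp (s • G) = 1 := by
      rw [← Matrix.exp_add_of_commute _ _ hcomm, ← add_smul]
      simp [NormedSpace.exp_zero]
    apply hx
    have h2 : (NormedSpace.exp ((-s) • G) * NormedSpace.exp (s • G)).mulVec x = 0 := by
      rw [← Matrix.mulVec_mulVec]
      have : (NormedSpace.exp (s • G)).mulVec x = 0 := h
      rw [this, Matrix.mulVec_zero]
    rwa [hinv, Matrix.one_mulVec] at h2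
  have hupos : ∀ s : ℝ, 0 < v s ⬝ᵥ P.mulVec (v s) := fun s => hPpos (v s) (hvne s)
  -- derivative of the quadratic form along the flow
  have hu' : ∀ s : ℝ, HasDerivAt (fun t => v t ⬝ᵥ P.mulVec (v t))
      (v s ⬝ᵥ (P * G + Gᵀ * P).mulVec (v s)) s := by
    intro s
    have hv : HasDerivAt v (G.mulVec (v s)) s := expDeriv G x s
    have hvi : ∀ i, HasDerivAt (fun t => v t i) (G.mulVec (v s) i) s := hasDerivAt_pi.1 hv
    have h1 : HasDerivAt (fun t => ∑ i, v t i * ∑ j, P i j * v t j)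
        (∑ i, (G.mulVec (v s) i * ∑ j, P i j * v s j
          + v s i * ∑ j, P i j * G.mulVec (v s) j)) s := by
      apply HasDerivAt.fun_sum
      intro i _
      exact (hvi i).mul (HasDerivAt.fun_sum fun j _ => (hvi j).const_mul (P i j))
    have hfun : (fun t => ∑ i, v t i * ∑ j, P i j * v t j)
        = fun t => v t ⬝ᵥ P.mulVec (v t) := by
      funext t
      simp [dotProduct, Matrix.mulVec]
    rw [hfun] at h1
    convert h1 using 1
    have split : v s ⬝ᵥ (P * G + Gᵀ * P).mulVec (v s)
        = G.mulVec (v s) ⬝ᵥ P.mulVec (v s) + v s ⬝ᵥ P.mulVec (G.mulVec (v s)) := by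
      rw [Matrix.add_mulVec, dotProduct_add, add_comm]
      congr 1
      · rw [← Matrix.mulVec_mulVec, Matrix.dotProduct_mulVec, Matrix.vecMul_transpose]
      · rw [← Matrix.mulVec_mulVec]
    rw [split]
    simp [dotProduct, Matrix.mulVec, Finset.sum_add_distrib]
  set φ : ℝ → ℝ := fun s => Real.log (v s ⬝ᵥ P.mulVec (v s)) with hφ_def
  have hφ' : ∀ s : ℝ, HasDerivAt φ
      ((v s ⬝ᵥ (P * G + Gᵀ * P).mulVec (v s)) / (v s ⬝ᵥ P.mulVec (v s))) s :=
    fun s => (hu' s).log (hupos s).ne'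
  have hb : ∀ s : ℝ, 2 * β ≤ (v s ⬝ᵥ (P * G + Gᵀ * P).mulVec (v s)) / (v s ⬝ᵥ P.mulVec (v s))
      ∧ (v s ⬝ᵥ (P * G + Gᵀ * P).mulVec (v s)) / (v s ⬝ᵥ P.mulVec (v s)) ≤ 2 * α := by
    intro s
    obtain ⟨h1, h2⟩ := hray (v s) (hvne s)
    constructor
    · rw [le_div_iff₀ (hupos s)]
      linarith
    · rw [div_le_iff₀ (hupos s)]
      linarith
  have mono1 : Monotone (fun s => 2 * α * s - φ s) := by
    have hd : ∀ s : ℝ, HasDerivAt (fun s => 2 * α * s - φ s)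
        (2 * α - (v s ⬝ᵥ (P * G + Gᵀ * P).mulVec (v s)) / (v s ⬝ᵥ P.mulVec (v s))) s := by
      intro s
      have := ((hasDerivAt_id s).const_mul (2 * α)).fun_sub (hφ' s)
      simpa using this
    apply monotone_of_deriv_nonneg (fun s => (hd s).differentiableAt)
    intro s
    rw [(hd s).deriv]
    have := (hb s).2
    linarith
  have mono2 : Monotone (fun s => φ s - 2 * β * s) := by
    have hd : ∀ s : ℝ, HasDerivAt (fun s => φ s - 2 * β * s)
        ((v s ⬝ᵥ (P * G + Gᵀ * P).mulVec (v s)) / (v s ⬝ᵥ P.mulVec (v s)) - 2 * β) s := by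
      intro s
      have := (hφ' s).fun_sub ((hasDerivAt_id s).const_mul (2 * β))
      simpa using this
    apply monotone_of_deriv_nonneg (fun s => (hd s).differentiableAt)
    intro s
    rw [(hd s).deriv]
    have := (hb s).1
    linarith
  have hxP : 0 < x ⬝ᵥ P.mulVec x := hPpos x hx
  have hφ0 : φ 0 = Real.log (x ⬝ᵥ P.mulVec x) := by
    have : v 0 = x := by
      rw [hv_def]
      simp [NormedSpace.exp_zero, Matrix.one_mulVec]
    rw [hφ_def]
    simp only [this]
  have hφs0 : φ s₀ = 0 := by
    have h1 : v s₀ ⬝ᵥ P.mulVec (v s₀) = 1 := Real.sqrt_eq_one.1 hnd_eq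
    rw [hφ_def]
    simp only [h1, Real.log_one]
  constructor
  · -- nd x ≤ 1
    intro h1
    have hlog : Real.log (nd x) ≤ 0 := Real.log_nonpos hnd_pos.le h1
    have hs₀ : (0:ℝ) ≤ s₀ := by rw [hs₀_def]; linarith
    have A := mono1 hs₀
    have B := mono2 hs₀
    simp only [mul_zero, sub_zero, zero_sub, hφ0, hφs0] at A B
    constructor
    · apply rpow_le_sqrt_aux hxP hnd_pos
      rw [hs₀_def] at A
      linarith
    · apply sqrt_le_rpow_aux hxP hnd_pos
      rw [hs₀_def] at B
      linarith
  · -- 1 ≤ nd x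
    intro h1
    have hlog : 0 ≤ Real.log (nd x) := Real.log_nonneg h1
    have hs₀ : s₀ ≤ (0:ℝ) := by rw [hs₀_def]; linarith
    have A := mono1 hs₀
    have B := mono2 hs₀
    simp only [mul_zero, sub_zero, zero_sub, hφ0, hφs0] at A B
    constructor
    · apply rpow_le_sqrt_aux hxP hnd_pos
      rw [hs₀_def] at B
      linarith
    · apply sqrt_le_rpow_aux hxP hnd_pos
      rw [hs₀_def] at A
      linarith
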